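/- Let u : ℝ² → ℝ be a twice continuously differentiable function on a connected open set Ω satisfying 4·∂²u/∂x² + ∂²u/∂y² = 0 and ∂²u/∂x∂y = 0 on Ω, where Ω is a rectangle (a product of two open intervals). Then there exist constants c₁, c₂, c₃, c₄ such that u(x,y) = c₁(x² − 4y²) + c₂x + c₃y + c₄ for all (x,y) ∈ Ω. -/

import Mathlib

/-!
Since `u_xy = 0`, the partial derivative `u_x` does not depend on `y`, and hence
`u(x, y) = G x + H y` separates additively on the rectangle. The equation
`4 G''(x) + H''(y) = 0` then forces `G'' = k` and `H'' = -4k` for a constant `k`,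
so `G` and `H` are quadratic polynomials with leading coefficients `k / 2` and `-2k`.
-/

/-- Partial derivative in the first variable of a curried function. -/
noncomputable def pdx (f : ℝ → ℝ → ℝ) (x y : ℝ) : ℝ := deriv (fun t => f t y) x
/-- Partial derivative in the second variable of a curried function. -/
noncomputable def pdy (f : ℝ → ℝ → ℝ) (x y : ℝ) : ℝ := deriv (fun t => f x t) y

open Set

section PartialDerivatives

variable {f : ℝ → ℝ → ℝ} {x y : ℝ}

lemma hasDerivAt_pdx (hf : DifferentiableAt ℝ (fun p : ℝ × ℝ => f p.1 p.2) (x, y)) :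
    HasDerivAt (fun t => f t y) (pdx f x y) x :=
  DifferentiableAt.hasDerivAt <|
    hf.comp (f := fun t => (t, y)) x (differentiableAt_id.prodMk (differentiableAt_const y))

lemma hasDerivAt_pdy (hf : DifferentiableAt ℝ (fun p : ℝ × ℝ => f p.1 p.2) (x, y)) :
    HasDerivAt (fun t => f x t) (pdy f x y) y :=
  DifferentiableAt.hasDerivAt <|
    hf.comp (f := fun t => (x, t)) y ((differentiableAt_const x).prodMk differentiableAt_id)

lemma ContDiffOn.pdx {n : WithTop ℕ∞} {s : Set (ℝ × ℝ)}
    (hf : ContDiffOn ℝ (n + 1) (fun p : ℝ × ℝ => f p.1 p.2) s) (hs : IsOpen s) :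
    ContDiffOn ℝ n (fun p : ℝ × ℝ => pdx f p.1 p.2) s := by
  refine ((hf.fderiv_of_isOpen hs le_rfl).clm_apply
    (contDiffOn_const (c := ((1 : ℝ), (0 : ℝ))))).congr fun p hp => ?_
  have hd := (hf.differentiableOn (by simp)).differentiableAt (hs.mem_nhds hp)
  exact (hd.hasFDerivAt.comp_hasDerivAt p.1
    ((hasDerivAt_id p.1).prodMk (hasDerivAt_const p.1 p.2))).deriv

lemma pdx_eq_deriv_of_eqOn_add {s : Set (ℝ × ℝ)} (hs : IsOpen s) {g h : ℝ → ℝ}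
    (hf : ∀ x y, (x, y) ∈ s → f x y = g x + h y) (hxy : (x, y) ∈ s) :
    pdx f x y = deriv g x := by
  have hnhds : ∀ᶠ t in nhds x, (t, y) ∈ s :=
    (continuous_id.prodMk continuous_const).continuousAt.preimage_mem_nhds (hs.mem_nhds hxy)
  have hloc : (fun t => f t y) =ᶠ[nhds x] fun t => g t + h y := hnhds.mono fun t ht => hf t y ht
  rw [pdx, hloc.deriv_eq, deriv_add_const]

lemma pdy_eq_deriv_of_eqOn_add {s : Set (ℝ × ℝ)} (hs : IsOpen s) {g h : ℝ → ℝ}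
    (hf : ∀ x y, (x, y) ∈ s → f x y = g x + h y) (hxy : (x, y) ∈ s) :
    pdy f x y = deriv h y := by
  have hnhds : ∀ᶠ t in nhds y, (x, t) ∈ s :=
    (continuous_const.prodMk continuous_id).continuousAt.preimage_mem_nhds (hs.mem_nhds hxy)
  have hloc : (fun t => f x t) =ᶠ[nhds y] fun t => g x + h t := hnhds.mono fun t ht => hf x t ht
  rw [pdy, hloc.deriv_eq, deriv_const_add]

lemma pdx_pdx_eq_of_eqOn_add {s : Set (ℝ × ℝ)} (hs : IsOpen s) {g h : ℝ → ℝ}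
    (hf : ∀ x y, (x, y) ∈ s → f x y = g x + h y) (hxy : (x, y) ∈ s) :
    pdx (pdx f) x y = deriv (deriv g) x :=
  pdx_eq_deriv_of_eqOn_add (h := fun _ => 0) hs
    (fun _ _ hxy => (pdx_eq_deriv_of_eqOn_add hs hf hxy).trans (add_zero _).symm) hxy

lemma pdy_pdy_eq_of_eqOn_add {s : Set (ℝ × ℝ)} (hs : IsOpen s) {g h : ℝ → ℝ}
    (hf : ∀ x y, (x, y) ∈ s → f x y = g x + h y) (hxy : (x, y) ∈ s) :
    pdy (pdy f) x y = deriv (deriv h) y :=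
  pdy_eq_deriv_of_eqOn_add (g := fun _ => 0) hs
    (fun _ _ hxy => (pdy_eq_deriv_of_eqOn_add hs hf hxy).trans (zero_add _).symm) hxy

end PartialDerivatives

theorem eq_add_sub_of_pdy_pdx_eq_zero {f : ℝ → ℝ → ℝ} {I J : Set ℝ}
    (hI : IsOpen I) (hI' : IsPreconnected I) (hJ : IsOpen J) (hJ' : IsPreconnected J)
    (hf : ContDiffOn ℝ 2 (fun p : ℝ × ℝ => f p.1 p.2) (I ×ˢ J))
    (hmixed : ∀ x y, (x, y) ∈ I ×ˢ J → pdy (pdx f) x y = 0)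
    {x₀ y₀ x y : ℝ} (hx₀ : x₀ ∈ I) (hy₀ : y₀ ∈ J) (hx : x ∈ I) (hy : y ∈ J) :
    f x y = f x y₀ + f x₀ y - f x₀ y₀ := by
  have hIJ : IsOpen (I ×ˢ J) := hI.prod hJ
  have hdf : ∀ p ∈ I ×ˢ J, DifferentiableAt ℝ (fun p : ℝ × ℝ => f p.1 p.2) p := fun p hp =>
    (hf.differentiableOn two_ne_zero).differentiableAt (hIJ.mem_nhds hp)
  have hdfx : ∀ p ∈ I ×ˢ J, DifferentiableAt ℝ (fun p : ℝ × ℝ => pdx f p.1 p.2) p := fun p hp =>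
    ((hf.pdx (n := 1) hIJ).differentiableOn one_ne_zero).differentiableAt (hIJ.mem_nhds hp)
  have hfx_indep : ∀ x ∈ I, ∀ y ∈ J, pdx f x y = pdx f x y₀ := fun x hx y hy =>
    hJ.is_const_of_deriv_eq_zero hJ'
      (fun t ht => (hasDerivAt_pdy (hdfx _ ⟨hx, ht⟩)).differentiableAt.differentiableWithinAt)
      (fun t ht => hmixed x t ⟨hx, ht⟩) hy hy₀
  have hdiff : ∀ t ∈ I, HasDerivAt (fun t => f t y - f t y₀) (pdx f t y - pdx f t y₀) t :=
    fun t ht => (hasDerivAt_pdx (hdf _ ⟨ht, hy⟩)).sub (hasDerivAt_pdx (hdf _ ⟨ht, hy₀⟩))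
  have hdiff_const : f x y - f x y₀ = f x₀ y - f x₀ y₀ :=
    hI.is_const_of_deriv_eq_zero hI'
      (fun t ht => (hdiff t ht).differentiableAt.differentiableWithinAt)
      (fun t ht => by rw [(hdiff t ht).deriv, hfx_indep t ht y hy, sub_self, Pi.zero_apply])
      hx hx₀
  linarith

theorem exists_eq_quadratic_of_deriv_deriv_eq {f : ℝ → ℝ} {s : Set ℝ} {k : ℝ}
    (hs : IsOpen s) (hs' : IsPreconnected s) (hf : ContDiffOn ℝ 2 f s)
    (hf'' : ∀ x ∈ s, deriv (deriv f) x = k) :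
    ∃ m n : ℝ, ∀ x ∈ s, f x = k / 2 * x ^ 2 + m * x + n := by
  obtain ⟨hdf, -, hf'⟩ := (contDiffOn_succ_iff_deriv_of_isOpen (n := 1) hs).1 hf
  obtain ⟨m, hm⟩ := hs.exists_eq_add_of_deriv_eq hs' (hf'.differentiableOn one_ne_zero)
    (differentiableOn_id.const_mul k) fun x hx => by
      simp [hf'' x hx]
  obtain ⟨n, hn⟩ := hs.exists_eq_add_of_deriv_eq (g := fun x => k / 2 * x ^ 2 + m * x) hs' hdf
    (by fun_prop) fun x hx => by
      have hq : HasDerivAt (fun x => k / 2 * x ^ 2 + m * x) (k * x + m) x :=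
        (((hasDerivAt_pow 2 x).const_mul (k / 2)).add ((hasDerivAt_id' x).const_mul m)).congr_deriv
          (by simp only [Nat.cast_ofNat, pow_one, Nat.add_one_sub_one, mul_one]; ring)
      rw [hm hx, hq.deriv]
      rfl
  exact ⟨m, n, fun x hx => hn hx⟩

/-- On an open rectangle, a C² function satisfying 4 uₓₓ + u_yy = 0 and uₓy = 0
is of the form c₁(x²−4y²)+c₂x+c₃y+c₄. -/
theorem stmt0 (a b c d : ℝ) (Ω : Set (ℝ × ℝ)) (hΩ : Ω = Set.Ioo a b ×ˢ Set.Ioo c d)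
    (u : ℝ → ℝ → ℝ)
    (hu : ContDiffOn ℝ 2 (fun p : ℝ × ℝ => u p.1 p.2) Ω)
    (hpde1 : ∀ x y, (x, y) ∈ Ω →
      4 * pdx (pdx u) x y + pdy (pdy u) x y = 0)
    (hpde2 : ∀ x y, (x, y) ∈ Ω → pdy (pdx u) x y = 0) :
    ∃ c₁ c₂ c₃ c₄ : ℝ, ∀ x y, (x, y) ∈ Ω →
      u x y = c₁ * (x ^ 2 - 4 * y ^ 2) + c₂ * x + c₃ * y + c₄ := by
  subst hΩ
  rcases (Ioo a b ×ˢ Ioo c d).eq_empty_or_nonempty with hempty | ⟨⟨x₀, y₀⟩, hx₀, hy₀⟩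
  · exact ⟨0, 0, 0, 0, fun x y hxy => by simp [hempty] at hxy⟩
  set G : ℝ → ℝ := fun x => u x y₀
  set H : ℝ → ℝ := fun y => u x₀ y - u x₀ y₀
  have hsep : ∀ x y, (x, y) ∈ Ioo a b ×ˢ Ioo c d → u x y = G x + H y := fun x y hxy => by
    rw [eq_add_sub_of_pdy_pdx_eq_zero isOpen_Ioo isPreconnected_Ioo isOpen_Ioo
      isPreconnected_Ioo hu hpde2 hx₀ hy₀ hxy.1 hxy.2, add_sub_assoc]
  have hR : IsOpen (Ioo a b ×ˢ Ioo c d) := isOpen_Ioo.prod isOpen_Ioo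
  have hpde_sep : ∀ x ∈ Ioo a b, ∀ y ∈ Ioo c d, 4 * deriv (deriv G) x + deriv (deriv H) y = 0 :=
    fun x hx y hy => by
      rw [← pdx_pdx_eq_of_eqOn_add hR hsep ⟨hx, hy⟩, ← pdy_pdy_eq_of_eqOn_add hR hsep ⟨hx, hy⟩]
      exact hpde1 x y ⟨hx, hy⟩
  have hG : ContDiffOn ℝ 2 G (Ioo a b) :=
    hu.comp (contDiffOn_id.prodMk contDiffOn_const) fun x hx => ⟨hx, hy₀⟩
  have hH : ContDiffOn ℝ 2 H (Ioo c d) :=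
    (hu.comp (contDiffOn_const.prodMk contDiffOn_id) fun y hy => ⟨hx₀, hy⟩).sub contDiffOn_const
  set k := deriv (deriv G) x₀
  obtain ⟨m, n, hGk⟩ := exists_eq_quadratic_of_deriv_deriv_eq isOpen_Ioo isPreconnected_Ioo hG
    (k := k) fun x hx => by linarith [hpde_sep x hx y₀ hy₀, hpde_sep x₀ hx₀ y₀ hy₀]
  obtain ⟨m', n', hHk⟩ := exists_eq_quadratic_of_deriv_deriv_eq isOpen_Ioo isPreconnected_Ioo hH
    (k := -4 * k) fun y hy => by linarith [hpde_sep x₀ hx₀ y hy]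
  refine ⟨k / 2, m, m', n + n', fun x y hxy => ?_⟩
  rw [hsep x y hxy, hGk x hxy.1, hHk y hxy.2]
  ring
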